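/- With P and R_n as above, viewing R_n as a function of the coefficients u_j, the partial derivative satisfies \partial R_n(x)/\partial u_j = -(n/(N+1)) P(x)^{(n-N-1)/(N+1)} x^{N+1-j} + O(x^{-1}) as a Laurent series at infinity, for each j with 2 \le j \le N+1. -/

import Mathlib

/-- `x` viewed as a Laurent series at `x = ∞` (inverse of the local coordinate `t = x⁻¹`). -/
noncomputable def Xinf : LaurentSeries ℂ := HahnSeries.single (-1 : ℤ) 1

open Polynomial HahnSeries

lemma L1 {S U : LaurentSeries ℂ} {c₁ c₂ : ℤ} (hS : ∀ a < c₁, S.coeff a = 0)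
    (hU : ∀ b < c₂, U.coeff b = 0) {m : ℤ} (hm : m < c₁ + c₂) : (S * U).coeff m = 0 := by
  rw [HahnSeries.coeff_mul]
  apply Finset.sum_eq_zero
  intro ij hij
  rw [Finset.mem_addAntidiagonal] at hij
  rcases lt_or_ge ij.1 c₁ with h | h
  · rw [hS _ h, zero_mul]
  · rw [hU ij.2 (by omega), mul_zero]

lemma L2 {S U : LaurentSeries ℂ} {c₁ c₂ : ℤ} (hS : ∀ a < c₁, S.coeff a = 0)
    (hU : ∀ b < c₂, U.coeff b = 0) : (S * U).coeff (c₁ + c₂) = S.coeff c₁ * U.coeff c₂ := by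
  rw [HahnSeries.coeff_mul]
  rw [Finset.sum_eq_single ((c₁, c₂) : ℤ × ℤ)]
  · intro ij hij hne
    rw [Finset.mem_addAntidiagonal] at hij
    rcases lt_trichotomy ij.1 c₁ with h | h | h
    · rw [hS _ h, zero_mul]
    · exact absurd (Prod.ext h (by omega)) hne
    · rw [hU ij.2 (by omega), mul_zero]
  · intro h
    simp only [Finset.mem_addAntidiagonal, HahnSeries.mem_support, not_and_or, not_not] at h
    rcases h with h | h | h
    · rw [h, zero_mul]
    · rw [h, mul_zero]
    · exact absurd trivial h

lemma L3low {S : LaurentSeries ℂ} {c : ℤ} (hS : ∀ a < c, S.coeff a = 0) :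
    ∀ (t : ℕ) (m : ℤ), m < (t : ℤ) * c → (S ^ t).coeff m = 0 := by
  intro t
  induction t with
  | zero =>
      intro m hm
      simp only [Nat.cast_zero, zero_mul] at hm
      simp only [pow_zero, HahnSeries.coeff_one]
      rw [if_neg (by omega)]
  | succ t ih =>
      intro m hm
      rw [pow_succ]
      exact L1 (fun a ha => ih a ha) hS (by push_cast at hm ⊢; linarith)

lemma L3lead {S : LaurentSeries ℂ} {c : ℤ} (hS : ∀ a < c, S.coeff a = 0) :
    ∀ (t : ℕ), (S ^ t).coeff ((t : ℤ) * c) = (S.coeff c) ^ t := by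
  intro t
  induction t with
  | zero => simp
  | succ t ih =>
      rw [pow_succ, pow_succ, show ((t+1:ℕ):ℤ) * c = (t:ℤ)*c + c by push_cast; ring, ← ih]
      exact L2 (fun a ha => L3low hS t a ha) hS

lemma sum_coeff {ι : Type*} (s : Finset ι) (f : ι → LaurentSeries ℂ) (k : ℤ) :
    (∑ i ∈ s, f i).coeff k = ∑ i ∈ s, (f i).coeff k :=
  map_sum (HahnSeries.coeff.addMonoidHom k) f s

lemma L4 {S U : LaurentSeries ℂ} {o c : ℤ} (hS : ∀ k < o, S.coeff k = 0)
    (hU : ∀ k < o, U.coeff k = 0) (h : ∀ k ≤ c, S.coeff k = U.coeff k) :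
    ∀ (t : ℕ) (m : ℤ), m ≤ c + (t : ℤ) * o →
      (S ^ (t + 1)).coeff m = (U ^ (t + 1)).coeff m := by
  intro t
  induction t with
  | zero =>
      intro m hm
      simp only [zero_add, pow_one]
      have h0 : ((0 : ℕ) : ℤ) * o = 0 := by norm_num
      exact h m (by linarith)
  | succ t ih =>
    intro m hm
    have hto : ((t + 1 : ℕ) : ℤ) * o = (t : ℤ) * o + o := by push_cast; ring
    have key : (S ^ (t + 1 + 1) - U ^ (t + 1 + 1)).coeff m = 0 := by
      have e1 : S ^ (t + 1 + 1) - U ^ (t + 1 + 1)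
          = S * (S ^ (t + 1) - U ^ (t + 1)) + (S - U) * U ^ (t + 1) := by ring
      rw [e1, HahnSeries.coeff_add]
      rw [L1 (c₁ := o) (c₂ := c + (t : ℤ) * o + 1) hS
          (fun k hk => by rw [HahnSeries.coeff_sub, ih k (by omega)]; ring)
          (by omega),
        L1 (c₁ := c + 1) (c₂ := ((t + 1 : ℕ) : ℤ) * o)
          (fun k hk => by rw [HahnSeries.coeff_sub, h k (by omega)]; ring)
          (fun k hk => L3low hU (t + 1) k hk)
          (by omega), add_zero]
    rw [HahnSeries.coeff_sub] at key
    exact sub_eq_zero.mp key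

lemma algMap_eq (a : ℂ) : algebraMap ℂ (LaurentSeries ℂ) a = HahnSeries.single 0 a := by
  rw [HahnSeries.algebraMap_apply', PowerSeries.algebraMap_apply, Algebra.algebraMap_self_apply,
    HahnSeries.ofPowerSeries_C, HahnSeries.C_apply]

lemma Xinf_pow (e : ℕ) : Xinf ^ e = HahnSeries.single (-(e : ℤ)) 1 := by
  rw [Xinf, HahnSeries.single_pow]
  norm_num

lemma aeval_coeff (q : Polynomial ℂ) (m : ℕ) :
    (Polynomial.aeval Xinf q : LaurentSeries ℂ).coeff (-(m : ℤ)) = q.coeff m := by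
  induction q using Polynomial.induction_on' with
  | add p q hp hq => rw [map_add, HahnSeries.coeff_add, hp, hq, Polynomial.coeff_add]
  | monomial i a =>
      rw [Polynomial.aeval_monomial, Xinf_pow, algMap_eq,
        HahnSeries.single_mul_single, zero_add, mul_one,
        HahnSeries.coeff_single, Polynomial.coeff_monomial]
      split_ifs with h1 h2 h2 <;> first | rfl | omega

lemma aeval_coeff_pos (q : Polynomial ℂ) {k : ℤ} (hk : 0 < k) :
    (Polynomial.aeval Xinf q : LaurentSeries ℂ).coeff k = 0 := by
  induction q using Polynomial.induction_on' with
  | add p q hp hq => rw [map_add, HahnSeries.coeff_add, hp, hq, add_zero]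
  | monomial i a =>
      rw [Polynomial.aeval_monomial, Xinf_pow, algMap_eq,
        HahnSeries.single_mul_single, zero_add, mul_one, HahnSeries.coeff_single]
      rw [if_neg (by omega)]

lemma aeval_coeff' (q : Polynomial ℂ) {k : ℤ} (hk : k ≤ 0) :
    (Polynomial.aeval Xinf q : LaurentSeries ℂ).coeff k = q.coeff (-k).toNat := by
  have := aeval_coeff q (-k).toNat
  rw [show -(((-k).toNat : ℕ) : ℤ) = k by omega] at this
  exact this

lemma keyc {S W : LaurentSeries ℂ} {oS oW c : ℤ} (hS0 : ∀ a < oS, S.coeff a = 0)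
    (hS1 : S.coeff oS = 1) (hW : ∀ b < oW, W.coeff b = 0)
    (hSW : ∀ m ≤ c + oS, (S * W).coeff m = 0) : ∀ k ≤ c, W.coeff k = 0 := by
  have main : ∀ (i : ℕ), ∀ k ≤ c, k < oW + i → W.coeff k = 0 := by
    intro i
    induction i with
    | zero => intro k _ hk; exact hW k (by omega)
    | succ i ih =>
      intro k hkc hk
      have h0 := hSW (oS + k) (by omega)
      have hsum : (S * W).coeff (oS + k) = W.coeff k := by
        rw [HahnSeries.coeff_mul]
        rw [Finset.sum_eq_single ((oS, k) : ℤ × ℤ)]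
        · rw [hS1, one_mul]
        · intro ij hij hne
          rw [Finset.mem_addAntidiagonal] at hij
          rcases lt_trichotomy ij.1 oS with h | h | h
          · rw [hS0 _ h, zero_mul]
          · exact absurd (Prod.ext h (by omega)) hne
          · rw [ih ij.2 (by omega) (by omega), mul_zero]
        · intro h
          simp only [Finset.mem_addAntidiagonal, HahnSeries.mem_support, not_and_or,
            not_not] at h
          rcases h with h | h | h
          · rw [h, zero_mul]
          · rw [h, mul_zero]
          · exact absurd trivial h
      rw [hsum] at h0
      exact h0
  intro k hk
  rcases lt_or_ge k oW with h | h
  · exact hW k h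
  · exact main ((k - oW).toNat + 1) k hk (by omega)

lemma root_unique {X Y : LaurentSeries ℂ} {o : ℤ} (N : ℕ)
    (hX0 : ∀ k < o, X.coeff k = 0) (hX1 : X.coeff o = 1)
    (hY0 : ∀ k < o, Y.coeff k = 0) (hY1 : Y.coeff o = 1)
    (hpow : X ^ (N + 1) = Y ^ (N + 1)) : X = Y := by
  have hg := geom_sum₂_mul X Y (N + 1)
  rw [hpow, sub_self] at hg
  have hZ : (∑ i ∈ Finset.range (N + 1), X ^ i * Y ^ (N + 1 - 1 - i)) ≠ 0 := by
    intro h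
    have hc : (∑ i ∈ Finset.range (N + 1), X ^ i * Y ^ (N + 1 - 1 - i)).coeff ((N : ℤ) * o)
        = ((N : ℂ) + 1) := by
      rw [sum_coeff]
      have hterm : ∀ i ∈ Finset.range (N + 1),
          (X ^ i * Y ^ (N + 1 - 1 - i)).coeff ((N : ℤ) * o) = 1 := by
        intro i hi
        rw [Finset.mem_range] at hi
        have hiN : i ≤ N := by omega
        have hsplit : (N : ℤ) * o = (i : ℤ) * o + ((N - i : ℕ) : ℤ) * o := by
          push_cast [Nat.cast_sub hiN]; ring
        rw [show N + 1 - 1 - i = N - i from rfl, hsplit,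
          L2 (fun a ha => L3low hX0 i a ha) (fun b hb => L3low hY0 (N - i) b hb),
          L3lead hX0 i, L3lead hY0 (N - i), hX1, hY1, one_pow, one_pow, one_mul]
      rw [Finset.sum_congr rfl hterm]
      simp
    rw [h, HahnSeries.coeff_zero] at hc
    have : ((N : ℂ) + 1) ≠ 0 := by
      have : (0 : ℝ) < (N : ℝ) + 1 := by positivity
      intro hcon
      have := congrArg Complex.re hcon
      simp at this
      linarith
    exact this hc.symm
  rcases mul_eq_zero.mp hg with h | h
  · exact absurd h hZ
  · exact sub_eq_zero.mp h

lemma Daffine {f : ℂ → ℂ} {a b s₀ : ℂ} (h : ∀ s, f s = a + (s - s₀) * b) :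
    HasDerivAt f b s₀ := by
  have h1 : HasDerivAt (fun s : ℂ => a + (s - s₀) * b) b s₀ := by
    simpa using (((hasDerivAt_id s₀).sub_const s₀).mul_const b).const_add a
  exact h1.congr_of_eventuallyEq (Filter.Eventually.of_forall h)

lemma D2 {p q : ℂ → Polynomial ℂ} {p' q' : Polynomial ℂ} {s₀ : ℂ}
    (hp : ∀ m, HasDerivAt (fun s => (p s).coeff m) (p'.coeff m) s₀)
    (hq : ∀ m, HasDerivAt (fun s => (q s).coeff m) (q'.coeff m) s₀) (m : ℕ) :
    HasDerivAt (fun s => (p s * q s).coeff m) ((p' * q s₀ + p s₀ * q').coeff m) s₀ := by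
  have hd : HasDerivAt
      (fun s => ∑ x ∈ Finset.HasAntidiagonal.antidiagonal m, (p s).coeff x.1 * (q s).coeff x.2)
      (∑ x ∈ Finset.HasAntidiagonal.antidiagonal m,
        (p'.coeff x.1 * (q s₀).coeff x.2 + (p s₀).coeff x.1 * q'.coeff x.2)) s₀ := by
    apply HasDerivAt.fun_sum
    intro x _
    exact (hp x.1).mul (hq x.2)
  have hval : (∑ x ∈ Finset.HasAntidiagonal.antidiagonal m,
      (p'.coeff x.1 * (q s₀).coeff x.2 + (p s₀).coeff x.1 * q'.coeff x.2))
      = (p' * q s₀ + p s₀ * q').coeff m := by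
    rw [Polynomial.coeff_add, Polynomial.coeff_mul, Polynomial.coeff_mul,
      Finset.sum_add_distrib]
  rw [hval] at hd
  exact hd.congr_of_eventuallyEq
    (Filter.Eventually.of_forall fun s => Polynomial.coeff_mul (p s) (q s) m)

lemma D3 {p : ℂ → Polynomial ℂ} {p' : Polynomial ℂ} {s₀ : ℂ}
    (hp : ∀ m, HasDerivAt (fun s => (p s).coeff m) (p'.coeff m) s₀) :
    ∀ (t : ℕ) (m : ℕ), HasDerivAt (fun s => ((p s) ^ (t + 1)).coeff m)
      (((((t : ℂ) + 1)) • ((p s₀) ^ t * p')).coeff m) s₀ := by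
  intro t
  induction t with
  | zero =>
      intro m
      have h1 : HasDerivAt (fun s => (p s).coeff m)
          ((((((0 : ℕ) : ℂ) + 1)) • ((p s₀) ^ 0 * p')).coeff m) s₀ := by
        rw [show ((((0 : ℕ) : ℂ) + 1)) • ((p s₀) ^ 0 * p') = p' by simp]
        exact hp m
      exact h1.congr_of_eventuallyEq
        (Filter.Eventually.of_forall fun s => by simp)
  | succ t ih =>
      intro m
      have hstep := D2 (p' := (((t : ℂ) + 1)) • ((p s₀) ^ t * p')) (q' := p') ih hp m
      have hfun : ∀ s, ((p s) ^ (t + 1 + 1)).coeff m = ((p s) ^ (t + 1) * p s).coeff m :=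
        fun s => by rw [pow_succ]
      have hv : ((((t + 1 : ℕ) : ℂ) + 1)) • ((p s₀) ^ (t + 1) * p')
          = (((t : ℂ) + 1)) • ((p s₀) ^ t * p') * p s₀ + (p s₀) ^ (t + 1) * p' := by
        rw [smul_mul_assoc, show (p s₀) ^ t * p' * p s₀ = (p s₀) ^ (t + 1) * p' by ring]
        push_cast
        rw [show ((t : ℂ) + 1 + 1) = ((t : ℂ) + 1) + 1 by ring, add_smul, one_smul]
      have hstep' : HasDerivAt (fun s => ((p s) ^ (t + 1) * p s).coeff m)
          ((((((t + 1 : ℕ) : ℂ) + 1)) • ((p s₀) ^ (t + 1) * p')).coeff m) s₀ := by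
        rw [hv]; exact hstep
      exact hstep'.congr_of_eventuallyEq (Filter.Eventually.of_forall hfun)


/-- Viewing `R_n = (P^{n/(N+1)})₊` as a function of the coefficient `u_j`
(varied along the parameter `s`, the other coefficients being fixed), its partial
derivative satisfies
`∂R_n/∂u_j = -(n/(N+1)) P^{(n-N-1)/(N+1)} x^{N+1-j} + O(x^{-1})`.
Differentiation in `u_j` is encoded coefficientwise via `HasDerivAt`, and `O(x^{-1})`
means the coefficients of `x^0, x, x², …` (i.e. `t`-exponents `≤ 0`) agree. -/
theorem stmt2 (N n j : ℕ) (hN : 1 ≤ N) (hn : 1 ≤ n) (hj1 : 2 ≤ j) (hj2 : j ≤ N + 1)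
    (u : ℕ → ℂ) (s₀ : ℂ)
    (P : ℂ → Polynomial ℂ)
    (hP : ∀ s, P s = Polynomial.X ^ (N + 1)
        - ∑ i ∈ Finset.Icc 2 (N + 1),
            Polynomial.C (if i = j then s else u i) * Polynomial.X ^ (N + 1 - i))
    (F : ℂ → LaurentSeries ℂ)
    (hFpow : ∀ s, F s ^ (N + 1) = (Polynomial.aeval Xinf (P s)) ^ n)
    (hFlead : ∀ s, (F s).coeff (-(n : ℤ)) = 1)
    (hFlow : ∀ s, ∀ k : ℤ, k < -(n : ℤ) → (F s).coeff k = 0)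
    (R : ℂ → Polynomial ℂ)
    (hR : ∀ s, ∀ k : ℤ, k ≤ 0 →
      (Polynomial.aeval Xinf (R s) : LaurentSeries ℂ).coeff k = (F s).coeff k)
    (Ru : Polynomial ℂ)
    (hRu : ∀ m : ℕ, HasDerivAt (fun s => (R s).coeff m) (Ru.coeff m) s₀)
    (G : LaurentSeries ℂ)
    (hGpow : G ^ (N + 1) = (Polynomial.aeval Xinf (P s₀) : LaurentSeries ℂ) ^ ((n : ℤ) - N - 1))
    (hGlead : G.coeff (-((n : ℤ) - N - 1)) = 1)
    (hGlow : ∀ k : ℤ, k < -((n : ℤ) - N - 1) → G.coeff k = 0) :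
    ∀ k : ℤ, k ≤ 0 →
      (Polynomial.aeval Xinf Ru : LaurentSeries ℂ).coeff k
        = ((-(n : ℂ) / ((N : ℂ) + 1)) • (G * Xinf ^ (N + 1 - j))).coeff k := by

  -- notation
  set e : ℕ := N + 1 - j with he
  set A : LaurentSeries ℂ := Polynomial.aeval Xinf (R s₀) with hA
  set E : LaurentSeries ℂ := Polynomial.aeval Xinf Ru with hE
  set PP : LaurentSeries ℂ := Polynomial.aeval Xinf (P s₀) with hPP
  set F₀ : LaurentSeries ℂ := F s₀ with hF₀
  set D : LaurentSeries ℂ := (-(n : ℂ) / ((N : ℂ) + 1)) • (G * Xinf ^ e) with hD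
  have hNe : ((N : ℂ) + 1) ≠ 0 := by
    intro hcon
    have := congrArg Complex.re hcon
    simp at this
    have : (0:ℝ) ≤ (N:ℝ) := Nat.cast_nonneg N
    linarith
  -- basic coefficient facts
  have hRcoeff : ∀ s (m : ℕ), (R s).coeff m = (F s).coeff (-(m : ℤ)) := by
    intro s m
    rw [← aeval_coeff (R s) m, hR s _ (by omega)]
  have hRu_high : ∀ m : ℕ, n < m → Ru.coeff m = 0 := by
    intro m hm
    have h1 : HasDerivAt (fun s => (R s).coeff m) 0 s₀ :=
      (hasDerivAt_const s₀ (0:ℂ)).congr_of_eventuallyEq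
        (Filter.Eventually.of_forall fun s => show (R s).coeff m = 0 by
          rw [hRcoeff s m]; exact hFlow s _ (by omega))
    exact (hRu m).unique h1
  have hRun : Ru.coeff n = 0 := by
    have h1 : HasDerivAt (fun s => (R s).coeff n) 0 s₀ :=
      (hasDerivAt_const s₀ (1:ℂ)).congr_of_eventuallyEq
        (Filter.Eventually.of_forall fun s => show (R s).coeff n = 1 by
          rw [hRcoeff s n]; exact hFlead s)
    exact (hRu n).unique h1
  have hE0 : ∀ b : ℤ, b < -(n : ℤ) + 1 → E.coeff b = 0 := by
    intro b hb
    rw [hE, aeval_coeff' Ru (by omega)]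
    rcases eq_or_lt_of_le (show b ≤ -(n:ℤ) by omega) with hbe | hbl
    · rw [show (-b).toNat = n by omega]; exact hRun
    · exact hRu_high _ (by omega)
  have hGXe : ∀ b : ℤ, (G * Xinf ^ e).coeff b = G.coeff (b + (e : ℤ)) := by
    intro b
    rw [Xinf_pow]
    have h1 := HahnSeries.coeff_mul_single_add (r := (1:ℂ)) (x := G)
      (a := b + (e : ℤ)) (b := -(e : ℤ))
    rw [show b + (e:ℤ) + -(e:ℤ) = b by ring, mul_one] at h1
    exact h1
  have hecast : ((e : ℕ) : ℤ) = (N : ℤ) + 1 - (j : ℤ) := by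
    rw [he]; push_cast [Nat.cast_sub hj2]; ring
  have hD0 : ∀ b : ℤ, b < -(n : ℤ) + 1 → D.coeff b = 0 := by
    intro b hb
    rw [hD, HahnSeries.coeff_smul, hGXe, hGlow _ (by omega), smul_zero]
  -- F₀ and its powers
  have hF0low : ∀ b : ℤ, b < -(n : ℤ) → F₀.coeff b = 0 := fun b hb => hFlow s₀ b hb
  have hFN0 : ∀ a : ℤ, a < (N : ℤ) * (-(n : ℤ)) → (F₀ ^ N).coeff a = 0 :=
    fun a ha => L3low hF0low N a ha
  have hFN1 : (F₀ ^ N).coeff ((N : ℤ) * (-(n : ℤ))) = 1 := by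
    rw [L3lead hF0low N, hFlead s₀, one_pow]
  -- PP facts
  have hPcoeff_top : (P s₀).coeff (N + 1) = 1 := by
    rw [hP s₀, Polynomial.coeff_sub, Polynomial.finset_sum_coeff]
    rw [Polynomial.coeff_X_pow, if_pos rfl]
    rw [Finset.sum_eq_zero, sub_zero]
    intro i hi
    rw [Finset.mem_Icc] at hi
    rw [Polynomial.coeff_C_mul, Polynomial.coeff_X_pow,
      if_neg (show ¬(N + 1 = N + 1 - i) by omega), mul_zero]
  have hPcoeff_high : ∀ d : ℕ, N + 1 < d → (P s₀).coeff d = 0 := by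
    intro d hd
    rw [hP s₀, Polynomial.coeff_sub, Polynomial.finset_sum_coeff]
    rw [Polynomial.coeff_X_pow, if_neg (show ¬(d = N + 1) by omega)]
    rw [Finset.sum_eq_zero, sub_zero]
    intro i hi
    rw [Finset.mem_Icc] at hi
    rw [Polynomial.coeff_C_mul, Polynomial.coeff_X_pow,
      if_neg (show ¬(d = N + 1 - i) by omega), mul_zero]
  have hPP0 : ∀ b : ℤ, b < -((N : ℤ) + 1) → PP.coeff b = 0 := by
    intro b hb
    rw [hPP, aeval_coeff' _ (by omega)]
    exact hPcoeff_high _ (by omega)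
  have hPP1 : PP.coeff (-((N : ℤ) + 1)) = 1 := by
    rw [hPP, aeval_coeff' _ (by omega), show (-(-((N:ℤ)+1))).toNat = N + 1 by omega]
    exact hPcoeff_top
  have hPPne : PP ≠ 0 := by
    intro hcon
    rw [hcon, HahnSeries.coeff_zero] at hPP1
    exact zero_ne_one hPP1
  -- root uniqueness : F₀ ^ N * G = PP ^ (n - 1)
  have hcastn1 : ((n - 1 : ℕ) : ℤ) = (n : ℤ) - 1 := by push_cast [Nat.cast_sub hn]; ring
  have ho : ((n - 1 : ℕ) : ℤ) * (-((N : ℤ) + 1))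
      = (N : ℤ) * (-(n : ℤ)) + -((n : ℤ) - (N : ℤ) - 1) := by rw [hcastn1]; ring
  have hFG : F₀ ^ N * G = PP ^ (n - 1) := by
    apply root_unique (N := N) (o := ((n - 1 : ℕ) : ℤ) * (-((N : ℤ) + 1)))
    · intro b hb
      rw [ho] at hb
      exact L1 hFN0 hGlow hb
    · rw [ho, L2 hFN0 hGlow, hFN1, hGlead, one_mul]
    · exact fun b hb => L3low hPP0 (n - 1) b hb
    · rw [L3lead hPP0, hPP1, one_pow]
    · -- power equality
      have h1 : (F₀ ^ N * G) ^ (N + 1) = (F₀ ^ (N + 1)) ^ N * G ^ (N + 1) := by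
        rw [mul_pow, ← pow_mul, ← pow_mul, Nat.mul_comm]
      rw [h1, hFpow s₀, hGpow, ← hPP]
      rw [← pow_mul, ← zpow_natCast PP (n * N), ← zpow_add₀ hPPne,
        ← pow_mul, ← zpow_natCast PP ((n - 1) * (N + 1))]
      congr 1
      push_cast [Nat.cast_sub hn]
      ring
  -- derivative of coefficients of P
  set Pd : Polynomial ℂ := -(Polynomial.X ^ e) with hPdd
  have hPder : ∀ m : ℕ, HasDerivAt (fun s => (P s).coeff m) (Pd.coeff m) s₀ := by
    intro m
    apply Daffine (a := (P s₀).coeff m)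
    intro s
    have hsum : ∑ i ∈ Finset.Icc 2 (N + 1),
          (if i = j then s₀ else u i) * ((Polynomial.X : Polynomial ℂ) ^ (N + 1 - i)).coeff m
        - ∑ i ∈ Finset.Icc 2 (N + 1),
          (if i = j then s else u i) * ((Polynomial.X : Polynomial ℂ) ^ (N + 1 - i)).coeff m
        = (s₀ - s) * ((Polynomial.X : Polynomial ℂ) ^ e).coeff m := by
      rw [← Finset.sum_sub_distrib]
      rw [Finset.sum_eq_single j]
      · rw [if_pos rfl, if_pos rfl, ← sub_mul, he]
      · intro i _ hne
        rw [if_neg hne, if_neg hne, sub_self]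
      · intro hcon
        exact absurd (Finset.mem_Icc.mpr ⟨hj1, hj2⟩) hcon
    rw [hP s, hP s₀]
    simp only [Polynomial.coeff_sub, Polynomial.finset_sum_coeff, Polynomial.coeff_C_mul,
      hPdd, Polynomial.coeff_neg]
    linear_combination hsum
  -- the differentiated polynomial identity
  have hstar : ∀ d : ℕ, n * N ≤ d →
      (((N : ℂ) + 1) • ((R s₀) ^ N * Ru)).coeff d
        = ((n : ℂ) • ((P s₀) ^ (n - 1) * Pd)).coeff d := by
    intro d hd
    have hcnN : ((n * N : ℕ) : ℤ) = (n : ℤ) * (N : ℤ) := by push_cast; ring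
    have hdge : (n : ℤ) * (N : ℤ) ≤ (d : ℤ) := by
      rw [← hcnN]; exact_mod_cast hd
    have hpoly : ∀ s, ((R s) ^ (N + 1)).coeff d = ((P s) ^ n).coeff d := by
      intro s
      have hAs0 : ∀ b : ℤ, b < -(n : ℤ) →
          (Polynomial.aeval Xinf (R s) : LaurentSeries ℂ).coeff b = 0 := by
        intro b hb
        rw [hR s b (by omega)]
        exact hFlow s b hb
      have h4 := L4 (S := (Polynomial.aeval Xinf (R s) : LaurentSeries ℂ)) (U := F s)
        (o := -(n : ℤ)) (c := 0) hAs0 (hFlow s) (hR s) N (-(d : ℤ))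
        (by
          have : (N : ℤ) * (-(n : ℤ)) = -((n : ℤ) * (N : ℤ)) := by ring
          rw [zero_add, this]
          omega)
      calc ((R s) ^ (N + 1)).coeff d
          = ((Polynomial.aeval Xinf (R s) : LaurentSeries ℂ) ^ (N + 1)).coeff (-(d : ℤ)) := by
            rw [← map_pow, aeval_coeff]
        _ = ((F s) ^ (N + 1)).coeff (-(d : ℤ)) := h4
        _ = ((Polynomial.aeval Xinf (P s) : LaurentSeries ℂ) ^ n).coeff (-(d : ℤ)) := by
            rw [hFpow s]
        _ = ((P s) ^ n).coeff d := by rw [← map_pow, aeval_coeff]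
    have hDR := D3 hRu N d
    have hDP := D3 hPder (n - 1) d
    rw [show n - 1 + 1 = n by omega] at hDP
    have hc : (((n - 1 : ℕ) : ℂ) + 1) = (n : ℂ) := by push_cast [Nat.cast_sub hn]; ring
    rw [hc] at hDP
    have hDR' : HasDerivAt (fun s => ((P s) ^ n).coeff d)
        ((((N : ℂ) + 1) • ((R s₀) ^ N * Ru)).coeff d) s₀ :=
      hDR.congr_of_eventuallyEq (Filter.Eventually.of_forall fun s => (hpoly s).symm)
    exact hDR'.unique hDP
  -- the main Laurent series computation
  have hSW : ∀ m : ℤ, m ≤ 0 + (N : ℤ) * (-(n : ℤ)) → (F₀ ^ N * (E - D)).coeff m = 0 := by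
    intro m hm
    rw [zero_add] at hm
    have hprod : (n : ℤ) * (N : ℤ) = -((N : ℤ) * (-(n : ℤ))) := by ring
    -- step (i) : (A^N * E) and (F₀^N * E) agree at m
    have hA0 : ∀ b : ℤ, b < -(n : ℤ) → A.coeff b = 0 := by
      intro b hb
      rw [hA, hR s₀ b (by omega)]
      exact hFlow s₀ b hb
    have hpowagree : ∀ m' : ℤ, m' ≤ ((N - 1 : ℕ) : ℤ) * (-(n : ℤ)) →
        (A ^ N).coeff m' = (F₀ ^ N).coeff m' := by
      have h4 := L4 (S := A) (U := F₀) (o := -(n : ℤ)) (c := 0) hA0 hF0low (hR s₀) (N - 1)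
      rw [show N - 1 + 1 = N by omega] at h4
      intro m' hm'
      exact h4 m' (by omega)
    have hi : (A ^ N * E).coeff m = (F₀ ^ N * E).coeff m := by
      have hz : ((A ^ N - F₀ ^ N) * E).coeff m = 0 := by
        apply L1 (c₁ := ((N - 1 : ℕ) : ℤ) * (-(n : ℤ)) + 1) (c₂ := -(n : ℤ) + 1)
        · intro a ha
          rw [HahnSeries.coeff_sub, hpowagree a (by omega), sub_self]
        · exact hE0
        · have hcN1 : ((N - 1 : ℕ) : ℤ) * (-(n : ℤ))
              = (N : ℤ) * (-(n : ℤ)) + (n : ℤ) := by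
            push_cast [Nat.cast_sub hN]; ring
          omega
      rw [sub_mul, HahnSeries.coeff_sub] at hz
      exact sub_eq_zero.mp hz
    -- step (ii) : translate hstar
    have hd : n * N ≤ (-m).toNat := by
      have h1 : (n : ℤ) * (N : ℤ) ≤ -m := by omega
      omega
    have hstar' := hstar (-m).toNat hd
    have hmm : -(((-m).toNat : ℕ) : ℤ) = m := by omega
    have hm0 : m ≤ 0 := by
      have h1 : 0 ≤ (n : ℤ) * (N : ℤ) := by positivity
      linarith [hprod]
    have hL : (((N : ℂ) + 1) • ((R s₀) ^ N * Ru)).coeff (-m).toNat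
        = ((N : ℂ) + 1) * (A ^ N * E).coeff m := by
      rw [Polynomial.coeff_smul, smul_eq_mul]
      congr 1
      have hmap : (A ^ N * E : LaurentSeries ℂ)
          = Polynomial.aeval Xinf ((R s₀) ^ N * Ru) := by
        rw [map_mul, map_pow]
      rw [hmap, aeval_coeff' _ hm0]
    have hRt : ((n : ℂ) • ((P s₀) ^ (n - 1) * Pd)).coeff (-m).toNat
        = (n : ℂ) * (PP ^ (n - 1) * (-(Xinf ^ e))).coeff m := by
      rw [Polynomial.coeff_smul, smul_eq_mul]
      congr 1
      have hmap : (PP ^ (n - 1) * (-(Xinf ^ e)) : LaurentSeries ℂ)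
          = Polynomial.aeval Xinf ((P s₀) ^ (n - 1) * Pd) := by
        rw [map_mul, map_pow, hPdd, map_neg, map_pow, Polynomial.aeval_X, hPP]
      rw [hmap, aeval_coeff' _ hm0]
    rw [hL, hRt] at hstar'
    -- step (iii)+(iv) : rewrite RHS using hFG
    have hRHS : (PP ^ (n - 1) * (-(Xinf ^ e))).coeff m
        = -((F₀ ^ N * (G * Xinf ^ e)).coeff m) := by
      rw [← hFG, show F₀ ^ N * G * -Xinf ^ e = -(F₀ ^ N * (G * Xinf ^ e)) by ring,
        HahnSeries.coeff_neg]
    rw [hRHS, hi] at hstar'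
    -- now combine
    rw [mul_sub, HahnSeries.coeff_sub]
    have hDco : (F₀ ^ N * D).coeff m
        = (-(n : ℂ) / ((N : ℂ) + 1)) * (F₀ ^ N * (G * Xinf ^ e)).coeff m := by
      rw [hD, ← HahnSeries.single_zero_mul_eq_smul, mul_left_comm,
        HahnSeries.single_zero_mul_eq_smul, HahnSeries.coeff_smul, smul_eq_mul]
    rw [hDco]
    have hfield : ((N : ℂ) + 1) * ((-(n : ℂ) / ((N : ℂ) + 1))
        * (F₀ ^ N * (G * Xinf ^ e)).coeff m)
        = -(n : ℂ) * (F₀ ^ N * (G * Xinf ^ e)).coeff m := by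
      field_simp
    have : ((N : ℂ) + 1) * ((F₀ ^ N * E).coeff m
        - (-(n : ℂ) / ((N : ℂ) + 1)) * (F₀ ^ N * (G * Xinf ^ e)).coeff m) = 0 := by
      rw [mul_sub, hfield, hstar']
      ring
    rcases mul_eq_zero.mp this with h | h
    · exact absurd h hNe
    · exact h
  -- conclude by cancellation
  intro k hk
  have hW := keyc (S := F₀ ^ N) (W := E - D) (oS := (N : ℤ) * (-(n : ℤ)))
    (oW := -(n : ℤ) + 1) (c := 0) hFN0 hFN1
    (fun b hb => by rw [HahnSeries.coeff_sub, hE0 b hb, hD0 b hb, sub_zero]) hSW k hk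
  rw [HahnSeries.coeff_sub] at hW
  have := sub_eq_zero.mp hW
  rw [hE, hD, he] at this
  exact this
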